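/- arXiv:1710.05782 — 6 statements merged into one kernel-verified Lean document; each statement's English description precedes it below -/
import Mathlib

section
/- Let g(x) = (η/6)‖x−x₀‖³ on ℝⁿ with η > 0. Then for all x, y ∈ ℝⁿ, the Bregman divergence B_g(x;y) = g(x) − g(y) − ⟨∇g(y), x−y⟩ satisfies B_g(x;y) ≥ (η/12)‖x−y‖³. -/
/-!
Write `a = ‖x - x₀‖`, `b = ‖y - x₀‖`, `c = ‖x - y‖`. Polarization expresses the inner product
through `a, b, c`, and the divergence becomes `η/12 · ((a - b)² (2a + b) + 3bc²)`. So it suffices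
that `c³ ≤ (a - b)² (2a + b) + 3bc²` whenever `c ≤ a + b`. For `c ≤ 3b` both summands are already
large enough. For `c > 3b` we have `a - b ≥ c - 2b ≥ 0`, so the first summand dominates
`(c - 2b)² (2c - b)`, and this exceeds `c² (c - 3b)` by `(c - 2b)³ + 4b³ ≥ 0`.
-/

open scoped RealInnerProductSpace

lemma cube_le_of_le_add {a b c : ℝ} (ha : 0 ≤ a) (hb : 0 ≤ b) (hcab : c ≤ a + b) :
    c ^ 3 ≤ (a - b) ^ 2 * (2 * a + b) + 3 * b * c ^ 2 := by
  rcases le_or_gt c (3 * b) with hc | hc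
  · nlinarith [mul_nonneg (sq_nonneg (a - b)) (show 0 ≤ 2 * a + b by linarith),
      mul_nonneg (sq_nonneg c) (show 0 ≤ 3 * b - c by linarith)]
  · have hcb : 0 ≤ c - 2 * b := by linarith
    have hmono : (c - 2 * b) ^ 2 * (2 * c - b) ≤ (a - b) ^ 2 * (2 * a + b) :=
      mul_le_mul (pow_le_pow_left₀ hcb (by linarith) 2) (by linarith) (by linarith) (sq_nonneg _)
    nlinarith [pow_nonneg hcb 3, pow_nonneg hb 3]

lemma norm_cube_div_twelve_le_bregman {E : Type*} [NormedAddCommGroup E] [InnerProductSpace ℝ E]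
    (u v : E) : ‖v‖ ^ 3 / 12 ≤ ‖u + v‖ ^ 3 / 6 - ‖u‖ ^ 3 / 6 - ‖u‖ * ⟪u, v⟫ / 2 := by
  have hinner : 2 * ⟪u, v⟫ = ‖u + v‖ ^ 2 - ‖u‖ ^ 2 - ‖v‖ ^ 2 := by
    rw [norm_add_sq_real]; ring
  have htri : ‖v‖ ≤ ‖u + v‖ + ‖u‖ := by
    simpa using norm_sub_le (u + v) u
  have hcube := cube_le_of_le_add (norm_nonneg (u + v)) (norm_nonneg u) htri
  linear_combination hcube / 12 + ‖u‖ * hinner / 4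

/-- Bregman divergence lower bound for g(x) = (η/6)‖x−x₀‖³:
B_g(x;y) = g(x) − g(y) − ⟨∇g(y), x−y⟩ ≥ (η/12)‖x−y‖³, where
∇g(y) = (η/2)‖y−x₀‖(y−x₀). -/
theorem stmt_0 (n : ℕ) (x₀ x y : EuclideanSpace ℝ (Fin n)) (η : ℝ) (hη : 0 < η) :
    η / 6 * ‖x - x₀‖ ^ 3 - η / 6 * ‖y - x₀‖ ^ 3
      - ⟪(η / 2 * ‖y - x₀‖) • (y - x₀), x - y⟫ ≥ η / 12 * ‖x - y‖ ^ 3 := by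
  have h := mul_le_mul_of_nonneg_left (norm_cube_div_twelve_le_bregman (y - x₀) (x - y)) hη.le
  rw [sub_add_sub_cancel'] at h
  rw [real_inner_smul_left]
  linarith
end

section
/- Let h: ℝⁿ → ℝ be λ̄-strongly convex (λ̄ ≥ 0), x₀ ∈ ℝⁿ, θ₁, θ₂ ≥ 0, and define h̄(x) = h(x) + (θ₁/2)‖x−x₀‖² + (θ₂/3)‖x−x₀‖³ with minimizer x̄. Then for all x ∈ ℝⁿ, h̄(x) ≥ h̄(x̄) + ((θ₁+λ̄)/2)‖x−x̄‖² + (θ₂/6)‖x−x̄‖³. -/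
/-! If `h̄` admits at every point `y` a lower bound `h̄ x ≥ h̄ y + ⟪g y, x - y⟫ + ω ‖x - y‖`, then
applying it at `z = (1 - t) x̄ + t x` to both `x̄` and `x` and adding the two bounds with weights
`1 - t` and `t` cancels the subgradient term. Minimality of `x̄` then gives
`h̄ x - h̄ x̄ ≥ ω ((1 - t) ‖x - x̄‖)`, and `t → 0` gives `h̄ x - h̄ x̄ ≥ ω ‖x - x̄‖`.
Such bounds add up, and each of the three summands of `h̄` has one: `h` by strong convexity,
`‖·‖²` with equality, and `‖·‖³` with gradient `3 ‖y‖ y` and modulus `r³ / 2`. -/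

open scoped RealInnerProductSpace
open Filter Topology Set

variable {E : Type*} [NormedAddCommGroup E] [InnerProductSpace ℝ E]

def HasSubgradientWithModulus (f : E → ℝ) (g : E → E) (ω : ℝ → ℝ) : Prop :=
  ∀ x y, f y + ⟪g y, x - y⟫ + ω ‖x - y‖ ≤ f x

namespace HasSubgradientWithModulus

variable {f f₁ f₂ : E → ℝ} {g g₁ g₂ : E → E} {ω ω₁ ω₂ : ℝ → ℝ}

theorem add (h₁ : HasSubgradientWithModulus f₁ g₁ ω₁) (h₂ : HasSubgradientWithModulus f₂ g₂ ω₂) :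
    HasSubgradientWithModulus (fun x => f₁ x + f₂ x) (fun y => g₁ y + g₂ y)
      (fun r => ω₁ r + ω₂ r) := fun x y => by
  rw [inner_add_left]
  linarith [h₁ x y, h₂ x y]

theorem const_mul (hf : HasSubgradientWithModulus f g ω) {c : ℝ} (hc : 0 ≤ c) :
    HasSubgradientWithModulus (fun x => c * f x) (fun y => c • g y) (fun r => c * ω r) :=
  fun x y => by
  rw [real_inner_smul_left]
  linarith [mul_le_mul_of_nonneg_left (hf x y) hc]

theorem comp_sub_const (hf : HasSubgradientWithModulus f g ω) (x₀ : E) :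
    HasSubgradientWithModulus (fun x => f (x - x₀)) (fun y => g (y - x₀)) ω := fun x y => by
  simpa only [sub_sub_sub_cancel_right] using hf (x - x₀) (y - x₀)

theorem smul_add_smul_le (hf : HasSubgradientWithModulus f g ω) {a b : ℝ} (ha : 0 ≤ a)
    (hb : 0 ≤ b) (hab : a + b = 1) (x y : E) :
    f (a • x + b • y) + (a * ω (b * ‖x - y‖) + b * ω (a * ‖x - y‖)) ≤ a * f x + b * f y := by
  set z := a • x + b • y
  have hxz : x - z = b • (x - y) := calc
    x - z = (a + b) • x - z := by rw [hab, one_smul]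
    _ = b • (x - y) := by module
  have hyz : y - z = (-a) • (x - y) := calc
    y - z = (a + b) • y - z := by rw [hab, one_smul]
    _ = (-a) • (x - y) := by module
  have hnxz : ‖x - z‖ = b * ‖x - y‖ := by rw [hxz, norm_smul, Real.norm_of_nonneg hb]
  have hnyz : ‖y - z‖ = a * ‖x - y‖ := by
    rw [hyz, norm_smul, norm_neg, Real.norm_of_nonneg ha]
  have hcancel : a * ⟪g z, x - z⟫ + b * ⟪g z, y - z⟫ = 0 := by
    rw [hxz, hyz, real_inner_smul_right, real_inner_smul_right]; ring
  have hx := mul_le_mul_of_nonneg_left (hf x z) ha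
  have hy := mul_le_mul_of_nonneg_left (hf y z) hb
  rw [hnxz] at hx
  rw [hnyz] at hy
  have hfz : f z = (a + b) * f z := by rw [hab, one_mul]
  linarith

theorem add_le_of_isMinOn (hf : HasSubgradientWithModulus f g ω) {xbar x : E}
    (hmin : IsMinOn f (segment ℝ xbar x) xbar) (hω : ∀ r, 0 ≤ r → 0 ≤ ω r)
    (hcont : ContinuousWithinAt ω (Iic ‖x - xbar‖) ‖x - xbar‖) :
    f xbar + ω ‖x - xbar‖ ≤ f x := by
  set r := ‖x - xbar‖
  have hbound : ∀ t ∈ Ioo (0 : ℝ) 1, ω ((1 - t) * r) ≤ f x - f xbar := by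
    rintro t ⟨ht0, ht1⟩
    have hseg := hf.smul_add_smul_le (sub_nonneg.2 ht1.le) ht0.le (sub_add_cancel 1 t) xbar x
    rw [norm_sub_rev] at hseg
    have hz : f xbar ≤ f ((1 - t) • xbar + t • x) :=
      isMinOn_iff.1 hmin _ ⟨1 - t, t, by linarith, ht0.le, by ring, rfl⟩
    have hω_t := mul_nonneg (sub_nonneg.2 ht1.le) (hω (t * r) (by positivity))
    refine le_of_mul_le_mul_left ?_ ht0
    linarith
  have hshrink : Tendsto (fun t : ℝ => (1 - t) * r) (𝓝[>] 0) (𝓝[≤] r) := by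
    refine tendsto_nhdsWithin_iff.2 ⟨?_, ?_⟩
    · have : Continuous fun t : ℝ => (1 - t) * r := by fun_prop
      simpa using (this.tendsto 0).mono_left nhdsWithin_le_nhds
    · filter_upwards [self_mem_nhdsWithin] with t (ht : 0 < t)
      exact mul_le_of_le_one_left (norm_nonneg _) (by linarith)
  have hlim := le_of_tendsto (hcont.tendsto.comp hshrink)
    (mem_of_superset (Ioo_mem_nhdsGT one_pos) hbound)
  linarith

end HasSubgradientWithModulus

theorem hasSubgradientWithModulus_norm_sq :
    HasSubgradientWithModulus (fun x : E => ‖x‖ ^ 2) (fun y => (2 : ℝ) • y) (fun r => r ^ 2) :=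
  fun x y => by
  rw [real_inner_smul_left, ← norm_add_sq_real, add_sub_cancel]

theorem sq_mul_three_mul_sub_add_sq_mul_nonneg {α β d : ℝ} (hα : 0 ≤ α) (hβ : 0 ≤ β)
    (htri : d ≤ α + β) :
    0 ≤ d ^ 2 * (3 * α - d) + (β - α) ^ 2 * (2 * β + α) := by
  rcases le_or_gt d (3 * α) with hsmall | hlarge
  · positivity
  -- `d ↦ d² (3α - d)` decreases on `[2α, ∞)`, so `d = α + β` is the worst case,
  -- where the sum is `(β - α)³ + 4α³`.
  have hdecr : (α + β) ^ 2 * (2 * α - β) ≤ d ^ 2 * (3 * α - d) := by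
    have hfactor : 0 ≤ (α + β - d) * ((α + β) ^ 2 + (α + β) * d + d ^ 2 - 3 * α * (α + β + d)) :=
      mul_nonneg (by linarith) (by nlinarith)
    nlinarith
  have hworst : 0 ≤ (α + β) ^ 2 * (2 * α - β) + (β - α) ^ 2 * (2 * β + α) := by
    nlinarith [pow_nonneg (show 0 ≤ β - α by linarith) 3, pow_nonneg hα 3]
  linarith

theorem hasSubgradientWithModulus_norm_cube :
    HasSubgradientWithModulus (fun x : E => ‖x‖ ^ 3) (fun y => (3 * ‖y‖) • y)
      (fun r => r ^ 3 / 2) := fun x y => by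
  have hinner : ⟪(3 * ‖y‖) • y, x - y⟫ = 3 * ‖y‖ * (⟪y, x⟫ - ‖y‖ ^ 2) := by
    rw [real_inner_smul_left, inner_sub_right, real_inner_self_eq_norm_sq]
  have hdist : ‖x - y‖ ^ 2 = ‖x‖ ^ 2 - 2 * ⟪y, x⟫ + ‖y‖ ^ 2 := by
    rw [norm_sub_sq_real, real_inner_comm]
  have key := sq_mul_three_mul_sub_add_sq_mul_nonneg (norm_nonneg y) (norm_nonneg x)
    ((norm_sub_le x y).trans_eq (add_comm _ _))
  simp only
  rw [hinner]
  nlinarith [norm_nonneg y]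

/-- For h λ̄-strongly convex (expressed via a subgradient selection s) and
h̄(x) = h(x) + (θ₁/2)‖x−x₀‖² + (θ₂/3)‖x−x₀‖³ with minimizer x̄,
h̄(x) ≥ h̄(x̄) + ((θ₁+λ̄)/2)‖x−x̄‖² + (θ₂/6)‖x−x̄‖³. -/
theorem stmt_6 (n : ℕ) (h : EuclideanSpace ℝ (Fin n) → ℝ)
    (s : EuclideanSpace ℝ (Fin n) → EuclideanSpace ℝ (Fin n))
    (lam θ₁ θ₂ : ℝ) (hlam : 0 ≤ lam) (hθ₁ : 0 ≤ θ₁) (hθ₂ : 0 ≤ θ₂)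
    (hstrong : ∀ x y, h x ≥ h y + ⟪s y, x - y⟫ + lam / 2 * ‖x - y‖ ^ 2)
    (x₀ xbar : EuclideanSpace ℝ (Fin n))
    (hmin : ∀ x, h xbar + θ₁ / 2 * ‖xbar - x₀‖ ^ 2 + θ₂ / 3 * ‖xbar - x₀‖ ^ 3
      ≤ h x + θ₁ / 2 * ‖x - x₀‖ ^ 2 + θ₂ / 3 * ‖x - x₀‖ ^ 3) :
    ∀ x, h x + θ₁ / 2 * ‖x - x₀‖ ^ 2 + θ₂ / 3 * ‖x - x₀‖ ^ 3
      ≥ h xbar + θ₁ / 2 * ‖xbar - x₀‖ ^ 2 + θ₂ / 3 * ‖xbar - x₀‖ ^ 3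
        + (θ₁ + lam) / 2 * ‖x - xbar‖ ^ 2 + θ₂ / 6 * ‖x - xbar‖ ^ 3 := by
  intro x
  have hh : HasSubgradientWithModulus h s (fun r => lam / 2 * r ^ 2) := hstrong
  have hbar := (hh.add ((hasSubgradientWithModulus_norm_sq.comp_sub_const x₀).const_mul
    (by positivity : 0 ≤ θ₁ / 2))).add
    ((hasSubgradientWithModulus_norm_cube.comp_sub_const x₀).const_mul
      (by positivity : 0 ≤ θ₂ / 3))
  have hgrowth := hbar.add_le_of_isMinOn (x := x) (fun z _ => hmin z) (fun r hr => by positivity)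
    (Continuous.continuousWithinAt (by fun_prop))
  linarith
end

section
/- For any x, x̄, x₀ ∈ ℝⁿ and θ₂ ≥ 0: (θ₂/3)‖x−x₀‖³ ≥ (θ₂/3)‖x̄−x₀‖³ + (θ₂/6)‖x−x̄‖³ + θ₂⟨‖x̄−x₀‖(x̄−x₀), x−x̄⟩. -/
/-!
With `r = ‖x‖`, `s = ‖y‖`, `d = ‖y - x‖` the polarization identity
`2⟪x, y - x⟫ = s² - r² - d²` turns the cubic inequality, times six, into
`0 ≤ (s - r)²(2s + r) + d²(3r - d)`, a polynomial inequality in three reals tied together only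
by the triangle inequality `d ≤ r + s`. It is clear for `d ≤ 3r`; for `d > 3r` the first term
is monotone in `s ≥ d - r`, and at `s = d - r` the sum equals `(d - 2r)³ + 4r³`.
-/

open scoped RealInnerProductSpace

theorem sub_sq_mul_add_sq_mul_nonneg {r s d : ℝ} (hr : 0 ≤ r) (hs : 0 ≤ s) (hd : d ≤ r + s) :
    0 ≤ (s - r) ^ 2 * (2 * s + r) + d ^ 2 * (3 * r - d) := by
  rcases le_or_gt d (3 * r) with hd3 | hd3
  · have : 0 ≤ d ^ 2 * (3 * r - d) := mul_nonneg (sq_nonneg d) (by linarith)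
    positivity
  · have hsq : (d - 2 * r) ^ 2 ≤ (s - r) ^ 2 := pow_le_pow_left₀ (by linarith) (by linarith) 2
    have hmono : (d - 2 * r) ^ 2 * (2 * d - r) ≤ (s - r) ^ 2 * (2 * s + r) :=
      mul_le_mul hsq (by linarith) (by linarith) (sq_nonneg _)
    calc 0 ≤ (d - 2 * r) ^ 3 + 4 * r ^ 3 := by
          have : 0 ≤ d - 2 * r := by linarith
          positivity
      _ = (d - 2 * r) ^ 2 * (2 * d - r) + d ^ 2 * (3 * r - d) := by ring
      _ ≤ (s - r) ^ 2 * (2 * s + r) + d ^ 2 * (3 * r - d) := by linarith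

theorem norm_pow_three_add_inner_le {E : Type*} [NormedAddCommGroup E] [InnerProductSpace ℝ E]
    (x y : E) : ‖x‖ ^ 3 / 3 + ⟪‖x‖ • x, y - x⟫ + ‖y - x‖ ^ 3 / 6 ≤ ‖y‖ ^ 3 / 3 := by
  have hinner : 2 * ⟪x, y - x⟫ = ‖y‖ ^ 2 - ‖x‖ ^ 2 - ‖y - x‖ ^ 2 := by
    rw [inner_sub_right, real_inner_self_eq_norm_sq, norm_sub_sq_real, real_inner_comm]
    ring
  have key := sub_sq_mul_add_sq_mul_nonneg (norm_nonneg x) (norm_nonneg y)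
    ((norm_sub_le y x).trans_eq (add_comm _ _))
  rw [real_inner_smul_left]
  linear_combination key / 6 + ‖x‖ * hinner / 2

/-- Cubic-term inequality:
(θ₂/3)‖x−x₀‖³ ≥ (θ₂/3)‖x̄−x₀‖³ + (θ₂/6)‖x−x̄‖³ + θ₂⟨‖x̄−x₀‖(x̄−x₀), x−x̄⟩. -/
theorem stmt_7 (n : ℕ) (x xbar x₀ : EuclideanSpace ℝ (Fin n)) (θ₂ : ℝ) (hθ₂ : 0 ≤ θ₂) :
    θ₂ / 3 * ‖x - x₀‖ ^ 3 ≥ θ₂ / 3 * ‖xbar - x₀‖ ^ 3 + θ₂ / 6 * ‖x - xbar‖ ^ 3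
      + θ₂ * ⟪‖xbar - x₀‖ • (xbar - x₀), x - xbar⟫ := by
  have h := norm_pow_three_add_inner_le (xbar - x₀) (x - x₀)
  rw [sub_sub_sub_cancel_right] at h
  linear_combination θ₂ * h
end

section
/- Let f: ℝⁿ → ℝ be twice continuously differentiable with γ-Lipschitz Hessian, H a symmetric positive semidefinite n×n matrix with 0 ⪯ H − ∇²f(x_t), and η ≥ 0. Let x_{t+1} minimize x ↦ f(x_t) + ⟨∇f(x_t), x−x_t⟩ + (1/2)⟨H(x−x_t), x−x_t⟩ + (η/6)‖x−x_t‖³. Then for every x ∈ ℝⁿ: f(x_{t+1}) ≤ f(x) + (1/2)⟨(H−∇²f(x_t))(x−x_t), x−x_t⟩ − (η/12)‖x−x_{t+1}‖³ + ((γ+η)/6)‖x−x_t‖³ + ((γ−η)/6)‖x_{t+1}−x_t‖³ − (1/2)⟨H(x−x_{t+1}), x−x_{t+1}⟩ + (1/2)⟨(H−∇²f(x_t))(x_{t+1}−x_t), x_{t+1}−x_t⟩. -/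
/-!
Write `s = x_{t+1} - x_t` and `d = x - x_{t+1}`, so that `x - x_t = s + d`. Since the Hessian is
`γ`-Lipschitz, the second-order Taylor expansion of `f` at `x_t` has error at most `γ/6 ‖·‖³`; use
it as an upper bound at `x_{t+1}` and as a lower bound at `x`. The first-order condition of the
model, `∇f(x_t) + H s + (η/2)‖s‖ s = 0`, eliminates `⟪∇f(x_t), d⟫`, and the cubic term is handled
by the inequality `‖s‖³ + 3‖s‖⟪s, d⟫ + ½‖d‖³ ≤ ‖s + d‖³`. The one remaining quadratic term,
`-½⟪(H - ∇²f(x_t)) s, s⟫`, is at most `½⟪(H - ∇²f(x_t)) s, s⟫` because `H ⪰ ∇²f(x_t)`.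
-/

open scoped RealInnerProductSpace

open Set

theorem norm_le_of_norm_deriv_le_pow {E : Type*} [NormedAddCommGroup E] [NormedSpace ℝ E]
    {φ φ' : ℝ → E} {C b : ℝ} (k : ℕ) (hφ : ∀ t, HasDerivAt φ (φ' t) t) (h0 : φ 0 = 0)
    (hbound : ∀ t ∈ Ico 0 b, ‖φ' t‖ ≤ C * t ^ k) :
    ∀ t ∈ Icc 0 b, ‖φ t‖ ≤ C * t ^ (k + 1) / (k + 1) := by
  refine image_norm_le_of_norm_deriv_right_le_deriv_boundary
    (fun t _ => (hφ t).continuousAt.continuousWithinAt) (fun t _ => (hφ t).hasDerivWithinAt)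
    (by simp [h0]) (fun t => ?_) hbound
  refine (((hasDerivAt_pow (k + 1) t).const_mul C).div_const ((k : ℝ) + 1)).congr_deriv ?_
  push_cast
  field_simp

theorem abs_taylor_remainder_two_le {g g' g'' : ℝ → ℝ} {K : ℝ}
    (hg : ∀ t, HasDerivAt g (g' t) t) (hg' : ∀ t, HasDerivAt g' (g'' t) t)
    (hK : ∀ t ∈ Ico 0 1, |g'' t - g'' 0| ≤ K * t) :
    |g 1 - g 0 - g' 0 - g'' 0 / 2| ≤ K / 6 := by
  have hφ₁ : ∀ t, HasDerivAt (fun t => g' t - g' 0 - t * g'' 0) (g'' t - g'' 0) t := fun t =>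
    ((hg' t).sub_const _).sub (hasDerivAt_mul_const _)
  have hφ₀ : ∀ t, HasDerivAt (fun t => g t - g 0 - t * g' 0 - t ^ 2 / 2 * g'' 0)
      (g' t - g' 0 - t * g'' 0) t := fun t => by
    refine ((((hg t).sub_const _).sub (hasDerivAt_mul_const _)).sub
      (((hasDerivAt_pow 2 t).div_const 2).mul_const (g'' 0))).congr_deriv ?_
    ring
  have h₁ := norm_le_of_norm_deriv_le_pow 1 hφ₁ (by simp) (by simpa using hK)
  have h₀ := norm_le_of_norm_deriv_le_pow (C := K / 2) 2 hφ₀ (by simp) fun t ht => by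
    convert h₁ t (Ico_subset_Icc_self ht) using 1
    norm_num [mul_div_right_comm]
  have h := h₀ 1 (by simp)
  norm_num at h
  convert h using 1 <;> ring_nf

variable {E : Type*} [NormedAddCommGroup E] [InnerProductSpace ℝ E]

theorem abs_taylor_remainder_two_le_of_lipschitz_hessian [CompleteSpace E] {f : E → ℝ}
    {f' : E → E} {f'' : E → E →L[ℝ] E} {γ : ℝ} (hgrad : ∀ x, HasGradientAt f (f' x) x)
    (hhess : ∀ x, HasFDerivAt f' (f'' x) x) (hlip : ∀ x y, ‖f'' x - f'' y‖ ≤ γ * ‖x - y‖)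
    (x y : E) :
    |f y - f x - ⟪f' x, y - x⟫ - 1 / 2 * ⟪f'' x (y - x), y - x⟫| ≤ γ / 6 * ‖y - x‖ ^ 3 := by
  set v := y - x
  have hline : ∀ t : ℝ, HasDerivAt (fun t : ℝ => x + t • v) v t := fun t => by
    simpa using ((hasDerivAt_id t).smul_const v).const_add x
  have hg : ∀ t : ℝ, HasDerivAt (fun t => f (x + t • v)) ⟪f' (x + t • v), v⟫ t := fun t => by
    simpa [Function.comp_def] using (hgrad _).hasFDerivAt.comp_hasDerivAt t (hline t)
  have hg' : ∀ t : ℝ, HasDerivAt (fun t => ⟪f' (x + t • v), v⟫) ⟪f'' (x + t • v) v, v⟫ t :=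
    fun t => ((hhess _).comp_hasDerivAt t (hline t)).inner ℝ (hasDerivAt_const t v) |>.congr_deriv
      (by simp)
  have hK : ∀ t ∈ Ico (0 : ℝ) 1,
      |⟪f'' (x + t • v) v, v⟫ - ⟪f'' (x + (0 : ℝ) • v) v, v⟫| ≤ γ * ‖v‖ ^ 3 * t := by
    intro t ht
    rw [zero_smul, add_zero, ← inner_sub_left, ← sub_apply]
    calc |⟪(f'' (x + t • v) - f'' x) v, v⟫|
        ≤ ‖f'' (x + t • v) - f'' x‖ * ‖v‖ * ‖v‖ :=
          (abs_real_inner_le_norm _ _).trans (by gcongr; exact ContinuousLinearMap.le_opNorm _ _)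
      _ ≤ γ * (t * ‖v‖) * ‖v‖ * ‖v‖ := by
          gcongr
          simpa [norm_smul, abs_of_nonneg ht.1] using hlip (x + t • v) x
      _ = γ * ‖v‖ ^ 3 * t := by ring
  have h := abs_taylor_remainder_two_le hg hg' hK
  simp only [zero_smul, add_zero, one_smul, add_sub_cancel, v] at h
  convert h using 2 <;> ring

theorem cubic_nonneg_of_le_add {a b u : ℝ} (ha : 0 ≤ a) (hb : 0 ≤ b) (hu : 0 ≤ u)
    (hbu : b ≤ u + a) : 0 ≤ 2 * u ^ 3 - 3 * a * u ^ 2 + a ^ 3 + 3 * a * b ^ 2 - b ^ 3 := by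
  -- `2u³ - 3au² + a³ = (u - a)²(2u + a)`; if `b > 3a`, use `u ≥ b - a` instead
  rcases le_or_gt b (3 * a) with h | h
  · nlinarith [mul_nonneg (sq_nonneg (u - a)) (by linarith : (0 : ℝ) ≤ 2 * u + a),
      mul_nonneg (mul_nonneg hb hb) (by linarith : (0 : ℝ) ≤ 3 * a - b)]
  · have h2 : 2 * a ≤ b - a := by linarith
    nlinarith [mul_nonneg (by linarith : (0 : ℝ) ≤ u - (b - a))
        (by nlinarith : (0 : ℝ) ≤ 2 * u ^ 2 + 2 * u * (b - a) + 2 * (b - a) ^ 2 - 3 * a * u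
          - 3 * a * (b - a)),
      mul_nonneg (by linarith : (0 : ℝ) ≤ b - 3 * a)
        (by nlinarith [sq_nonneg (b - 3 * a / 2)] : (0 : ℝ) ≤ b ^ 2 - 3 * a * b + 3 * a ^ 2)]

theorem norm_pow_three_add_ge (s d : E) :
    ‖s‖ ^ 3 + 3 * ‖s‖ * ⟪s, d⟫ + 1 / 2 * ‖d‖ ^ 3 ≤ ‖s + d‖ ^ 3 := by
  have hcubic := cubic_nonneg_of_le_add (norm_nonneg s) (norm_nonneg d) (norm_nonneg (s + d))
    (by simpa using norm_sub_le (s + d) s)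
  have hsq : ‖s‖ * ‖s + d‖ ^ 2 = ‖s‖ * (‖s‖ ^ 2 + 2 * ⟪s, d⟫ + ‖d‖ ^ 2) := by
    rw [norm_add_sq_real]
  nlinarith

theorem cubic_model_gradient_eq_zero {g : E} {H : E →L[ℝ] E}
    (hH : (H : E →ₗ[ℝ] E).IsSymmetric) {η : ℝ} {s : E}
    (hmin : IsLocalMin (fun y => ⟪g, y⟫ + 1 / 2 * ⟪H y, y⟫ + η / 6 * ‖y‖ ^ 3) s) :
    g + H s + (η / 2 * ‖s‖) • s = 0 := by
  have hcube : HasFDerivAt (fun y : E => ‖y‖ ^ 3) ((3 * ‖s‖) • innerSL ℝ s) s := by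
    convert hasFDerivAt_norm_rpow s (p := 3) (by norm_num) using 1
    · ext y
      norm_cast
    · norm_num
  have hderiv := hmin.hasFDerivAt_eq_zero <|
    ((innerSL ℝ g).hasFDerivAt.add ((H.hasFDerivAt.inner ℝ (hasFDerivAt_id s)).const_mul _)).add
      (hcube.const_mul _)
  have horth : ∀ w, ⟪g + H s + (η / 2 * ‖s‖) • s, w⟫ = 0 := fun w => by
    have h := congrArg (· w) hderiv
    have hHw : ⟪H w, s⟫ = ⟪H s, w⟫ := (hH w s).trans (real_inner_comm _ _)
    simp only [add_apply, smul_apply, zero_apply, ContinuousLinearMap.comp_apply,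
      ContinuousLinearMap.prod_apply, fderivInnerCLM_apply, innerSL_apply_apply,
      ContinuousLinearMap.coe_id', id_eq, smul_eq_mul, hHw] at h
    rw [inner_add_left, inner_add_left, real_inner_smul_left]
    linarith
  exact inner_self_eq_zero.mp (horth _)

theorem stmt_8_general (n : ℕ) (f : EuclideanSpace ℝ (Fin n) → ℝ)
    (f' : EuclideanSpace ℝ (Fin n) → EuclideanSpace ℝ (Fin n))
    (f'' : EuclideanSpace ℝ (Fin n) → EuclideanSpace ℝ (Fin n) →L[ℝ] EuclideanSpace ℝ (Fin n))
    (γ η : ℝ) (hη : 0 ≤ η)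
    (hgrad : ∀ x, HasGradientAt f (f' x) x)
    (hhess : ∀ x, HasFDerivAt f' (f'' x) x)
    (hlip : ∀ x y, ‖f'' x - f'' y‖ ≤ γ * ‖x - y‖)
    (H : EuclideanSpace ℝ (Fin n) →L[ℝ] EuclideanSpace ℝ (Fin n))
    (hHsymm : ∀ u v, ⟪H u, v⟫ = ⟪u, H v⟫)
    (xt : EuclideanSpace ℝ (Fin n))
    (hHpsd : ∀ v, 0 ≤ ⟪H v - f'' xt v, v⟫)
    (xnext : EuclideanSpace ℝ (Fin n))
    (hmin : ∀ x, f xt + ⟪f' xt, xnext - xt⟫ + 1 / 2 * ⟪H (xnext - xt), xnext - xt⟫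
        + η / 6 * ‖xnext - xt‖ ^ 3
      ≤ f xt + ⟪f' xt, x - xt⟫ + 1 / 2 * ⟪H (x - xt), x - xt⟫ + η / 6 * ‖x - xt‖ ^ 3) :
    ∀ x, f xnext ≤ f x + 1 / 2 * ⟪(H - f'' xt) (x - xt), x - xt⟫
      - η / 12 * ‖x - xnext‖ ^ 3 + (γ + η) / 6 * ‖x - xt‖ ^ 3
      + (γ - η) / 6 * ‖xnext - xt‖ ^ 3
      - 1 / 2 * ⟪H (x - xnext), x - xnext⟫
      + 1 / 2 * ⟪(H - f'' xt) (xnext - xt), xnext - xt⟫ := by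
  intro x
  have htaylor := abs_taylor_remainder_two_le_of_lipschitz_hessian hgrad hhess hlip xt
  have hupper := (abs_le.mp (htaylor xnext)).2
  have hlower := (abs_le.mp (htaylor x)).1
  set s := xnext - xt
  set d := x - xnext
  have hw : x - xt = s + d := by simp [s, d]
  have hstep : f' xt + H s + (η / 2 * ‖s‖) • s = 0 :=
    cubic_model_gradient_eq_zero hHsymm <| .of_forall fun y => by
      have h := hmin (y + xt)
      simp only [add_sub_cancel_right] at h
      linarith
  have hgrad_d := congrArg (⟪·, d⟫) hstep
  have hcube :=
    mul_le_mul_of_nonneg_left (norm_pow_three_add_ge s d) (by positivity : 0 ≤ η / 6)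
  have hpsd := hHpsd s
  have hsym : ⟪H d, s⟫ = ⟪H s, d⟫ := (hHsymm d s).trans (real_inner_comm _ _)
  rw [hw] at hlower ⊢
  simp only [map_add, inner_add_left, inner_add_right, inner_sub_left, sub_apply,
    real_inner_smul_left, inner_zero_left] at hlower hcube hpsd hgrad_d ⊢
  linarith

/-- Key recursion (Lemma 1 of the paper) for the inexact cubic-regularized Newton step. -/
theorem stmt_8 (n : ℕ) (f : EuclideanSpace ℝ (Fin n) → ℝ)
    (f' : EuclideanSpace ℝ (Fin n) → EuclideanSpace ℝ (Fin n))
    (f'' : EuclideanSpace ℝ (Fin n) → EuclideanSpace ℝ (Fin n) →L[ℝ] EuclideanSpace ℝ (Fin n))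
    (γ η : ℝ) (hγ : 0 ≤ γ) (hη : 0 ≤ η)
    (hgrad : ∀ x, HasGradientAt f (f' x) x)
    (hhess : ∀ x, HasFDerivAt f' (f'' x) x)
    (hcont : Continuous f'')
    (hlip : ∀ x y, ‖f'' x - f'' y‖ ≤ γ * ‖x - y‖)
    (H : EuclideanSpace ℝ (Fin n) →L[ℝ] EuclideanSpace ℝ (Fin n))
    (hHsymm : ∀ u v, ⟪H u, v⟫ = ⟪u, H v⟫)
    (xt : EuclideanSpace ℝ (Fin n))
    (hHpsd : ∀ v, 0 ≤ ⟪H v - f'' xt v, v⟫)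
    (xnext : EuclideanSpace ℝ (Fin n))
    (hmin : ∀ x, f xt + ⟪f' xt, xnext - xt⟫ + 1 / 2 * ⟪H (xnext - xt), xnext - xt⟫
        + η / 6 * ‖xnext - xt‖ ^ 3
      ≤ f xt + ⟪f' xt, x - xt⟫ + 1 / 2 * ⟪H (x - xt), x - xt⟫ + η / 6 * ‖x - xt‖ ^ 3) :
    ∀ x, f xnext ≤ f x + 1 / 2 * ⟪(H - f'' xt) (x - xt), x - xt⟫
      - η / 12 * ‖x - xnext‖ ^ 3 + (γ + η) / 6 * ‖x - xt‖ ^ 3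
      + (γ - η) / 6 * ‖xnext - xt‖ ^ 3
      - 1 / 2 * ⟪H (x - xnext), x - xnext⟫
      + 1 / 2 * ⟪(H - f'' xt) (xnext - xt), xnext - xt⟫ :=
  stmt_8_general n f f' f'' γ η hη hgrad hhess hlip H hHsymm xt hHpsd xnext hmin
end

section
/- Let f: ℝⁿ → ℝ be twice continuously differentiable with γ-Lipschitz Hessian, and let H be symmetric with (μ/2)I ⪯ H − ∇²f(w) ⪯ μI for some μ ≥ 0. Let x minimize x′ ↦ f(w) + ⟨∇f(w), x′−w⟩ + (1/2)⟨H(x′−w), x′−w⟩ + (η/6)‖x′−w‖³ with η ≥ 4γ. Then ‖∇f(x)‖ ≤ (γ + η/2)‖x−w‖² + μ‖x−w‖, and ⟨∇f(x), w−x⟩ ≥ min{ ‖∇f(x)‖²/(√3 μ), √(‖∇f(x)‖³/(4γ+2η)) }. -/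
open scoped RealInnerProductSpace

lemma phi_hasDerivAt (t : ℝ) : HasDerivAt (fun u : ℝ => u * Real.sqrt u) (3/2 * Real.sqrt t) t := by
  rcases lt_trichotomy t 0 with ht | rfl | ht
  · have h0 : Real.sqrt t = 0 := Real.sqrt_eq_zero_of_nonpos ht.le
    rw [h0, mul_zero]
    have hev : (fun _ => (0:ℝ)) =ᶠ[nhds t] (fun u : ℝ => u * Real.sqrt u) := by
      filter_upwards [eventually_lt_nhds ht] with u hu
      rw [Real.sqrt_eq_zero_of_nonpos hu.le, mul_zero]
    exact (hasDerivAt_const t (0:ℝ)).congr_of_eventuallyEq hev.symm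
  · rw [Real.sqrt_zero, mul_zero]
    rw [hasDerivAt_iff_tendsto_slope]
    have hsl : ∀ u : ℝ, u ≠ 0 → Real.sqrt u = slope (fun u : ℝ => u * Real.sqrt u) 0 u := by
      intro u hu
      simp [slope, hu, mul_comm, mul_div_assoc, div_self hu]
    have htd : Filter.Tendsto Real.sqrt (nhds 0) (nhds 0) := by
      simpa using (Real.continuous_sqrt.tendsto 0)
    apply Filter.Tendsto.congr' ?_ (htd.mono_left nhdsWithin_le_nhds)
    filter_upwards [self_mem_nhdsWithin] with u hu
    exact hsl u hu
  · have hs := Real.hasDerivAt_sqrt ht.ne'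
    have hmul := (hasDerivAt_id t).mul hs
    refine hmul.congr_deriv ?_
    have hsq : Real.sqrt t * Real.sqrt t = t := Real.mul_self_sqrt ht.le
    have hne : Real.sqrt t ≠ 0 := by positivity
    field_simp
    nlinarith [hsq, show id t = t from rfl]

lemma sq_le_imp' (a b : ℝ) (ha : 0 ≤ a) (hb : 0 ≤ b) (h : a^2 ≤ b^2) : a ≤ b := by nlinarith

lemma branch2_core1 (η q : ℝ) (hη : 4 ≤ η) (hq : 0 ≤ q) (hq2 : q ≤ 4/3*η) :
    0 ≤ (4+2*η)*(q+(η-1)/2)^2 - 1/8 - 3/2*(7/3*η*q + η^2/4) := by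
  nlinarith [mul_nonneg (by linarith : (0:ℝ) ≤ 4/3*η - q) (by linarith : (0:ℝ) ≤ η - 4),
    mul_nonneg hq (by linarith : (0:ℝ) ≤ η - 4),
    mul_nonneg (mul_nonneg (by linarith : (0:ℝ) ≤ η) (by linarith : (0:ℝ) ≤ η - 4)) (by linarith : (0:ℝ) ≤ η),
    mul_nonneg (mul_nonneg (by linarith : (0:ℝ) ≤ η) (by linarith : (0:ℝ) ≤ η)) hq]

set_option maxHeartbeats 1000000 in
lemma branch2_core2 (η q : ℝ) (hη : 4 ≤ η) (hq : 0 ≤ q) (hq2 : q ≤ 4/3*η) :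
    (7/3*η*q + η^2/4)*(3/4 + (7/3*η*q + η^2/4))^2
      ≤ ((4+2*η)*(q+(η-1)/2)^2 - 1/8 - 3/2*(7/3*η*q + η^2/4))^2 := by
  nlinarith [mul_nonneg (by linarith : (0:ℝ) ≤ 4/3*η - q) (by linarith : (0:ℝ) ≤ η - 4),
    mul_nonneg hq (by linarith : (0:ℝ) ≤ η - 4),
    mul_nonneg (mul_nonneg hq hq) (by linarith : (0:ℝ) ≤ η - 4),
    mul_nonneg (mul_nonneg hq (by linarith : (0:ℝ) ≤ 4/3*η - q)) (by linarith : (0:ℝ) ≤ η - 4),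
    sq_nonneg (q - 0.4*η), sq_nonneg (η*q - 0.4*η*η),
    mul_nonneg (mul_nonneg (by linarith : (0:ℝ) ≤ η) (by linarith : (0:ℝ) ≤ η)) (sq_nonneg (q - 0.4*η)),
    mul_nonneg (mul_nonneg (by linarith : (0:ℝ) ≤ η) (by linarith : (0:ℝ) ≤ η - 4)) (sq_nonneg (q - 0.4*η)),
    mul_nonneg (mul_nonneg (mul_nonneg (by linarith : (0:ℝ) ≤ η) (by linarith : (0:ℝ) ≤ η)) (by linarith : (0:ℝ) ≤ η)) (mul_nonneg hq (by linarith : (0:ℝ) ≤ 4/3*η - q))]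

lemma branch1_core (η μ q : ℝ) (hη : 4 ≤ η) (hμη : 4/3*η ≤ μ) (hq1 : μ/2 ≤ q) (hq2 : q ≤ μ) :
    ((μ+η)*q + η^2/4) + (μ+η/2)^2
      ≤ 2*(μ+η/2)*(1.73*(μ*(q+(η-1)/2)) - 1/4 - ((μ+η)*q + η^2/4)) := by
  nlinarith [mul_nonneg (by linarith : (0:ℝ) ≤ μ - 4/3*η) (by linarith : (0:ℝ) ≤ η - 4),
    mul_nonneg (by linarith : (0:ℝ) ≤ μ - q) (by linarith : (0:ℝ) ≤ η),
    mul_nonneg (by linarith : (0:ℝ) ≤ μ - 4/3*η) (by linarith : (0:ℝ) ≤ μ),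
    mul_nonneg (by linarith : (0:ℝ) ≤ μ - 4/3*η) (by linarith : (0:ℝ) ≤ q),
    mul_nonneg (by linarith : (0:ℝ) ≤ η - 4) (by linarith : (0:ℝ) ≤ q),
    mul_nonneg (mul_nonneg (by linarith : (0:ℝ) ≤ μ - 4/3*η) (by linarith : (0:ℝ) ≤ η)) (by linarith : (0:ℝ) ≤ q),
    mul_nonneg (mul_nonneg (by linarith : (0:ℝ) ≤ μ - q) (by linarith : (0:ℝ) ≤ η)) (by linarith : (0:ℝ) ≤ η),
    mul_nonneg (mul_nonneg (by linarith : (0:ℝ) ≤ η - 4) (by linarith : (0:ℝ) ≤ η)) (by linarith : (0:ℝ) ≤ q)]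

set_option maxHeartbeats 2000000 in
lemma scalar_main (η μ q S g : ℝ) (hη : 4 ≤ η) (hμ : 0 < μ) (hq1 : μ/2 ≤ q) (hq2 : q ≤ μ)
    (hS : 0 ≤ S) (hS2 : S^2 ≤ (μ+η)*q + η^2/4) (hg : 0 ≤ g) (hgb : g ≤ 1/2 + S) :
    min (g^2/(Real.sqrt 3 * μ)) (Real.sqrt (g^3/(4+2*η))) ≤ q + (η-1)/2 := by
  have hq0 : 0 ≤ q := by linarith
  obtain ⟨L, hL⟩ : ∃ l, l = q + (η-1)/2 := ⟨_, rfl⟩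
  have hL0 : 0 ≤ L := by rw [hL]; linarith
  by_cases hcase : μ ≤ 4/3*η
  · -- branch 2
    refine le_trans (min_le_right _ _) ?_
    have hqb : q ≤ 4/3*η := by linarith
    obtain ⟨Z, hZdef⟩ : ∃ z, z = 7/3*η*q + η^2/4 := ⟨_, rfl⟩
    have hZ : 0 ≤ Z := by rw [hZdef]; nlinarith
    have hSZ : S^2 ≤ Z := by rw [hZdef]; nlinarith
    obtain ⟨W, hWdef⟩ : ∃ w, w = Real.sqrt Z := ⟨_, rfl⟩
    have hW : 0 ≤ W := hWdef ▸ Real.sqrt_nonneg _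
    have hW2 : W^2 = Z := hWdef ▸ Real.sq_sqrt hZ
    have hSW : S ≤ W := sq_le_imp' _ _ hS hW (by rw [hW2]; exact hSZ)
    obtain ⟨P, hPdef⟩ : ∃ p, p = (4+2*η)*L^2 - 1/8 - 3/2*Z := ⟨_, rfl⟩
    have hP0 : 0 ≤ P := by rw [hPdef, hL, hZdef]; exact branch2_core1 η q hη hq0 hqb
    have hP2 : Z*(3/4+Z)^2 ≤ P^2 := by rw [hPdef, hL, hZdef]; exact branch2_core2 η q hη hq0 hqb
    have hWP : W*(3/4+Z) ≤ P := by
      refine sq_le_imp' _ _ (mul_nonneg hW (by linarith [hZ])) hP0 ?_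
      calc (W*(3/4+Z))^2 = W^2*(3/4+Z)^2 := by ring
        _ = Z*(3/4+Z)^2 := by rw [hW2]
        _ ≤ P^2 := hP2
    have hcube : g^3 ≤ (4+2*η)*L^2 := by
      have h1 : g^3 ≤ (1/2+S)^3 := pow_le_pow_left₀ hg hgb 3
      have h2 : (1/2+S)^3 = 1/8 + 3/2*S^2 + S*(3/4+S^2) := by ring
      have h3 : S*(3/4+S^2) ≤ W*(3/4+Z) :=
        mul_le_mul hSW (by linarith [hSZ]) (by nlinarith [sq_nonneg S]) hW
      have h5 : (4+2*η)*L^2 = 1/8 + 3/2*Z + P := by rw [hPdef]; ring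
      linarith [hSZ, hWP, h1, h3]
    have h4 : g^3/(4+2*η) ≤ L^2 := by
      rw [div_le_iff₀ (by linarith : (0:ℝ) < 4+2*η)]
      linarith [hcube]
    calc Real.sqrt (g^3/(4+2*η)) ≤ Real.sqrt (L^2) := Real.sqrt_le_sqrt h4
      _ = L := Real.sqrt_sq hL0
      _ = q + (η-1)/2 := hL
  · -- branch 1
    push_neg at hcase
    refine le_trans (min_le_left _ _) ?_
    have hs3sq : (Real.sqrt 3)^2 = 3 := Real.sq_sqrt (by norm_num)
    have hs3nn : 0 ≤ Real.sqrt 3 := Real.sqrt_nonneg 3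
    have hs3lb : 1.73 ≤ Real.sqrt 3 := by nlinarith
    obtain ⟨k, hk⟩ : ∃ k', k' = μ + η/2 := ⟨_, rfl⟩
    obtain ⟨A', hA'⟩ : ∃ a, a = 1.73*(μ*L) - 1/4 - ((μ+η)*q + η^2/4) := ⟨_, rfl⟩
    have hcubic : ((μ+η)*q + η^2/4) + k^2 ≤ 2*k*A' := by
      rw [hk, hA', hL]; exact branch1_core η μ q hη hcase.le hq1 hq2
    have hSA : S ≤ A' := by
      have h1 : 2*k*S ≤ 2*k*A' := by nlinarith [sq_nonneg (S-k), hS2, hcubic]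
      have h2k : (0:ℝ) < 2*k := by rw [hk]; linarith
      have h1' : (2*k)*S ≤ (2*k)*A' := by linarith
      exact le_of_mul_le_mul_left h1' h2k
    have hgsq : g^2 ≤ (1/2+S)^2 := pow_le_pow_left₀ hg hgb 2
    have hexp : (1/2+S)^2 = 1/4 + S + S^2 := by ring
    have hA'2 : A' ≤ Real.sqrt 3 * (μ*L) - 1/4 - ((μ+η)*q + η^2/4) := by
      rw [hA']
      have h73 : 1.73*(μ*L) ≤ Real.sqrt 3 * (μ*L) :=
        mul_le_mul_of_nonneg_right hs3lb (mul_nonneg hμ.le hL0)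
      linarith
    have hgoal : g^2 ≤ Real.sqrt 3 * (μ*L) := by linarith [hgsq, hSA, hA'2, hS2, hexp]
    rw [div_le_iff₀ (by positivity : (0:ℝ) < Real.sqrt 3 * μ)]
    calc g^2 ≤ Real.sqrt 3 * (μ*L) := hgoal
      _ = L * (Real.sqrt 3 * μ) := by ring
      _ = (q + (η-1)/2) * (Real.sqrt 3 * μ) := by rw [hL]

lemma scalar_unnorm (γ η μ q S g r : ℝ) (hγ : 0 < γ) (hη : 4*γ ≤ η) (hμ : 0 < μ) (hr : 0 < r)
    (hq1 : μ/2*r^2 ≤ q) (hq2 : q ≤ μ*r^2) (hS : 0 ≤ S)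
    (hS2 : S^2 ≤ (μ + η*r)*q + η^2*r^4/4) (hg : 0 ≤ g) (hgb : g ≤ γ/2*r^2 + S) :
    min (g^2/(Real.sqrt 3 * μ)) (Real.sqrt (g^3/(4*γ+2*η))) ≤ q + (η-γ)/2*r^3 := by
  have hη0 : 0 < η := by linarith
  have hc : (0:ℝ) < γ*r^3 := by positivity
  have key := scalar_main (η/γ) (μ/(γ*r)) (q/(γ*r^3)) (S/(γ*r^2)) (g/(γ*r^2))
    (by rw [le_div_iff₀ hγ]; linarith)
    (by positivity)
    (by rw [div_div, div_le_div_iff₀ (by positivity) (by positivity)]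
        nlinarith [mul_le_mul_of_nonneg_right hq1 (by positivity : (0:ℝ) ≤ γ*r)])
    (by rw [div_le_div_iff₀ (by positivity) (by positivity)]
        nlinarith [mul_le_mul_of_nonneg_right hq2 (by positivity : (0:ℝ) ≤ γ*r)])
    (by positivity)
    (by rw [div_pow, div_le_iff₀ (by positivity)]
        calc S^2 ≤ (μ + η*r)*q + η^2*r^4/4 := hS2
          _ = ((μ/(γ*r) + η/γ) * (q/(γ*r^3)) + (η/γ)^2/4) * (γ*r^2)^2 := by
            field_simp)
    (by positivity)
    (by rw [div_le_iff₀ (by positivity)]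
        calc g ≤ γ/2*r^2 + S := hgb
          _ = (1/2 + S/(γ*r^2)) * (γ*r^2) := by field_simp)
  have e1 : (g/(γ*r^2))^2/(Real.sqrt 3 * (μ/(γ*r))) = (g^2/(Real.sqrt 3 * μ))/(γ*r^3) := by
    have hs3 : (0:ℝ) < Real.sqrt 3 := Real.sqrt_pos.mpr (by norm_num)
    field_simp
  have e2 : Real.sqrt ((g/(γ*r^2))^3/(4+2*(η/γ))) = Real.sqrt (g^3/(4*γ+2*η))/(γ*r^3) := by
    have harg : (g/(γ*r^2))^3/(4+2*(η/γ)) = (g^3/(4*γ+2*η))/(γ*r^3)^2 := by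
      field_simp
    rw [harg, Real.sqrt_div (by positivity) _, Real.sqrt_sq hc.le]
  have e3 : q/(γ*r^3) + (η/γ-1)/2 = (q + (η-γ)/2*r^3)/(γ*r^3) := by
    field_simp
  rw [e1, e2, e3] at key
  rw [min_div_div_right hc.le] at key
  have := (div_le_div_iff₀ hc hc).mp key
  exact le_of_mul_le_mul_right this hc

section VectorLemmas

variable {E : Type*} [NormedAddCommGroup E] [InnerProductSpace ℝ E]

lemma taylor_grad_bound (f' : E → E) (f'' : E → E →L[ℝ] E) (γ : ℝ)
    (hhess : ∀ x, HasFDerivAt f' (f'' x) x)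
    (hlip : ∀ x y, ‖f'' x - f'' y‖ ≤ γ * ‖x - y‖) (w x : E) :
    ‖f' x - f' w - f'' w (x - w)‖ ≤ γ/2 * ‖x - w‖^2 := by
  set s := x - w with hs
  set F : ℝ → E := fun t => f' (w + t • s) - f' w - t • (f'' w s) with hF
  have hFd : ∀ t : ℝ, HasDerivAt F (f'' (w + t • s) s - f'' w s) t := by
    intro t
    have h1 : HasDerivAt (fun t : ℝ => w + t • s) s t := by
      simpa using ((hasDerivAt_id t).smul_const s).const_add w
    have h2 : HasDerivAt (fun t : ℝ => f' (w + t • s)) (f'' (w + t • s) s) t := by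
      have := (hhess (w + t • s)).comp_hasDerivAt t h1
      exact this
    have h3 : HasDerivAt (fun t : ℝ => t • (f'' w s)) (f'' w s) t := by
      simpa using (hasDerivAt_id t).smul_const (f'' w s)
    exact (h2.sub_const (f' w)).sub h3
  have hbound : ∀ t ∈ Set.Ico (0:ℝ) 1, ‖f'' (w + t • s) s - f'' w s‖ ≤ γ * ‖s‖^2 * t := by
    intro t ht
    have h1 : f'' (w + t • s) s - f'' w s = (f'' (w + t • s) - f'' w) s := by
      simp [ContinuousLinearMap.sub_apply]
    rw [h1]
    calc ‖(f'' (w + t • s) - f'' w) s‖ ≤ ‖f'' (w + t • s) - f'' w‖ * ‖s‖ :=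
        (f'' (w + t • s) - f'' w).le_opNorm s
      _ ≤ (γ * ‖(w + t • s) - w‖) * ‖s‖ :=
        mul_le_mul_of_nonneg_right (hlip _ _) (norm_nonneg s)
      _ = γ * ‖s‖^2 * t := by
        rw [add_sub_cancel_left, norm_smul, Real.norm_eq_abs, abs_of_nonneg ht.1]
        ring
  have hB : ∀ t : ℝ, HasDerivAt (fun t : ℝ => γ/2 * ‖s‖^2 * t^2) (γ * ‖s‖^2 * t) t := by
    intro t
    have := (hasDerivAt_pow 2 t).const_mul (γ/2 * ‖s‖^2)
    refine this.congr_deriv ?_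
    ring
  have key := image_norm_le_of_norm_deriv_right_le_deriv_boundary
    (f := F) (f' := fun t => f'' (w + t • s) s - f'' w s) (a := 0) (b := 1)
    (fun t _ => (hFd t).continuousAt.continuousWithinAt)
    (fun t _ => (hFd t).hasDerivWithinAt)
    (by simp [hF]) hB hbound
  have h1 := key (Set.right_mem_Icc.mpr zero_le_one)
  have hF1 : F 1 = f' x - f' w - f'' w s := by
    simp [hF, hs]
  rw [hF1] at h1
  calc ‖f' x - f' w - f'' w (x - w)‖ = ‖f' x - f' w - f'' w s‖ := by rw [hs]
    _ ≤ γ/2 * ‖s‖^2 * 1^2 := h1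
    _ = γ/2 * ‖x - w‖^2 := by rw [hs]; ring

lemma psd_inner_mul_le (A : E →L[ℝ] E) (hsymm : ∀ u v, ⟪A u, v⟫ = ⟪A v, u⟫)
    (hpsd : ∀ v, 0 ≤ ⟪A v, v⟫) (u v : E) : ⟪A u, v⟫^2 ≤ ⟪A u, u⟫ * ⟪A v, v⟫ := by
  have key : ∀ t : ℝ, 0 ≤ ⟪A v, v⟫ * (t*t) + (2*⟪A u, v⟫) * t + ⟪A u, u⟫ := by
    intro t
    have h0 := hpsd (u + t • v)
    have hexp : ⟪A (u + t • v), u + t • v⟫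
        = ⟪A u, u⟫ + 2*t*⟪A u, v⟫ + t^2*⟪A v, v⟫ := by
      rw [map_add, map_smul]
      simp only [inner_add_left, inner_add_right, inner_smul_left, inner_smul_right,
        starRingEnd_apply, star_trivial]
      rw [hsymm v u]
      ring
    nlinarith [h0, hexp]
  have hd := discrim_le_zero key
  rw [discrim] at hd
  nlinarith [hd]

end VectorLemmas

lemma hess_symm (n : ℕ) (f : EuclideanSpace ℝ (Fin n) → ℝ)
    (f' : EuclideanSpace ℝ (Fin n) → EuclideanSpace ℝ (Fin n))
    (f'' : EuclideanSpace ℝ (Fin n) → EuclideanSpace ℝ (Fin n) →L[ℝ] EuclideanSpace ℝ (Fin n))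
    (hgrad : ∀ x, HasGradientAt f (f' x) x)
    (hhess : ∀ x, HasFDerivAt f' (f'' x) x) (w : EuclideanSpace ℝ (Fin n)) :
    ∀ u v, ⟪f'' w u, v⟫ = ⟪f'' w v, u⟫ := by
  intro u v
  let T : EuclideanSpace ℝ (Fin n) →L[ℝ] StrongDual ℝ (EuclideanSpace ℝ (Fin n)) :=
    (InnerProductSpace.toDual ℝ (EuclideanSpace ℝ (Fin n))).toContinuousLinearEquiv.toContinuousLinearMap
  have hf : ∀ y, HasFDerivAt f (T (f' y)) y := fun y => (hgrad y).hasFDerivAt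
  have hx : HasFDerivAt (fun y => T (f' y)) (T.comp (f'' w)) w :=
    T.hasFDerivAt.comp w (hhess w)
  have h := second_derivative_symmetric hf hx u v
  have h1 : T (f'' w u) v = T (f'' w v) u := h
  simpa [T, InnerProductSpace.toDual_apply_apply] using h1

set_option maxHeartbeats 2000000 in
/-- Lemma 5 of the paper: gradient bound and lower bound on ⟨∇f(x), w−x⟩ for the
inexact cubic-regularized Newton step. -/
theorem stmt_14 (n : ℕ) (f : EuclideanSpace ℝ (Fin n) → ℝ)
    (f' : EuclideanSpace ℝ (Fin n) → EuclideanSpace ℝ (Fin n))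
    (f'' : EuclideanSpace ℝ (Fin n) → EuclideanSpace ℝ (Fin n) →L[ℝ] EuclideanSpace ℝ (Fin n))
    (γ η μ : ℝ) (hγ : 0 < γ) (hη : 4 * γ ≤ η) (hμ : 0 ≤ μ)
    (hgrad : ∀ x, HasGradientAt f (f' x) x)
    (hhess : ∀ x, HasFDerivAt f' (f'' x) x)
    (hcont : Continuous f'')
    (hlip : ∀ x y, ‖f'' x - f'' y‖ ≤ γ * ‖x - y‖)
    (H : EuclideanSpace ℝ (Fin n) →L[ℝ] EuclideanSpace ℝ (Fin n))
    (hHsymm : ∀ u v, ⟪H u, v⟫ = ⟪u, H v⟫)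
    (w : EuclideanSpace ℝ (Fin n))
    (hHlo : ∀ v, μ / 2 * ‖v‖ ^ 2 ≤ ⟪H v - f'' w v, v⟫)
    (hHhi : ∀ v, ⟪H v - f'' w v, v⟫ ≤ μ * ‖v‖ ^ 2)
    (x : EuclideanSpace ℝ (Fin n))
    (hmin : ∀ x', f w + ⟪f' w, x - w⟫ + 1 / 2 * ⟪H (x - w), x - w⟫ + η / 6 * ‖x - w‖ ^ 3
      ≤ f w + ⟪f' w, x' - w⟫ + 1 / 2 * ⟪H (x' - w), x' - w⟫ + η / 6 * ‖x' - w‖ ^ 3) :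
    ‖f' x‖ ≤ (γ + η / 2) * ‖x - w‖ ^ 2 + μ * ‖x - w‖ ∧
    ⟪f' x, w - x⟫ ≥ min (‖f' x‖ ^ 2 / (Real.sqrt 3 * μ))
      (Real.sqrt (‖f' x‖ ^ 3 / (4 * γ + 2 * η))) := by
  have hη0 : (0:ℝ) < η := by linarith
  have hr0 : (0:ℝ) ≤ ‖x - w‖ := norm_nonneg _
  -- symmetry of the Hessian
  have hsymW := hess_symm n f f' f'' hgrad hhess w
  -- stationarity
  have hstat : f' w + H (x - w) + (η / 2 * ‖x - w‖) • (x - w) = 0 := by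
    set m : EuclideanSpace ℝ (Fin n) → ℝ := fun y =>
      f w + ⟪f' w, y - w⟫ + 1 / 2 * ⟪H (y - w), y - w⟫ + η / 6 * ‖y - w‖ ^ 3 with hm
    have hsub : HasFDerivAt (fun y : EuclideanSpace ℝ (Fin n) => y - w)
        (ContinuousLinearMap.id ℝ (EuclideanSpace ℝ (Fin n))) x :=
      (hasFDerivAt_id x).sub_const w
    have h1 : HasFDerivAt (fun y : EuclideanSpace ℝ (Fin n) => (⟪f' w, y - w⟫ : ℝ))
        ((innerSL ℝ (f' w)).comp (ContinuousLinearMap.id ℝ (EuclideanSpace ℝ (Fin n)))) x :=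
      ((innerSL ℝ (f' w)).hasFDerivAt).comp x hsub
    have hH : HasFDerivAt (fun y : EuclideanSpace ℝ (Fin n) => H (y - w))
        (H.comp (ContinuousLinearMap.id ℝ (EuclideanSpace ℝ (Fin n)))) x :=
      H.hasFDerivAt.comp x hsub
    have h2 : HasFDerivAt (fun y : EuclideanSpace ℝ (Fin n) => (⟪H (y - w), y - w⟫ : ℝ))
        ((fderivInnerCLM ℝ (H (x-w), x-w)).comp ((H.comp (ContinuousLinearMap.id ℝ (EuclideanSpace ℝ (Fin n)))).prod (ContinuousLinearMap.id ℝ (EuclideanSpace ℝ (Fin n))))) x :=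
      hH.inner ℝ hsub
    have hsq : HasFDerivAt (fun y : EuclideanSpace ℝ (Fin n) => ‖y - w‖^2)
        (2 • ((innerSL ℝ (x-w)).comp (ContinuousLinearMap.id ℝ (EuclideanSpace ℝ (Fin n))))) x :=
      hsub.norm_sq
    have hcube : HasFDerivAt (fun y : EuclideanSpace ℝ (Fin n) => ‖y - w‖^3)
        ((3/2 * Real.sqrt (‖x-w‖^2)) • (2 • ((innerSL ℝ (x-w)).comp (ContinuousLinearMap.id ℝ (EuclideanSpace ℝ (Fin n)))))) x := by
      have hcomp := (phi_hasDerivAt (‖x-w‖^2)).comp_hasFDerivAt x hsq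
      have heq : (fun y : EuclideanSpace ℝ (Fin n) => ‖y - w‖^3)
          = fun y : EuclideanSpace ℝ (Fin n) => ‖y - w‖^2 * Real.sqrt (‖y - w‖^2) := by
        funext y
        rw [Real.sqrt_sq (norm_nonneg _)]
        ring
      rw [heq]
      exact hcomp
    have hmodel : HasFDerivAt m
        (((innerSL ℝ (f' w)).comp (ContinuousLinearMap.id ℝ (EuclideanSpace ℝ (Fin n)))
          + (1/2 : ℝ) • ((fderivInnerCLM ℝ (H (x-w), x-w)).comp ((H.comp (ContinuousLinearMap.id ℝ (EuclideanSpace ℝ (Fin n)))).prod (ContinuousLinearMap.id ℝ (EuclideanSpace ℝ (Fin n))))))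
          + (η/6 : ℝ) • ((3/2 * Real.sqrt (‖x-w‖^2)) • (2 • ((innerSL ℝ (x-w)).comp (ContinuousLinearMap.id ℝ (EuclideanSpace ℝ (Fin n))))))) x := by
      have := ((h1.const_add (f w)).add (h2.const_mul (1/2))).add (hcube.const_mul (η/6))
      exact this
    have hminOn : IsMinOn m Set.univ x := by
      rw [isMinOn_univ_iff]
      intro y
      exact hmin y
    have hloc : IsLocalMin m x := hminOn.isLocalMin Filter.univ_mem
    have hD0 := hloc.hasFDerivAt_eq_zero hmodel
    have happ : ∀ v : EuclideanSpace ℝ (Fin n),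
        ⟪f' w, v⟫ + ⟪H (x-w), v⟫ + (η/2*‖x-w‖) * ⟪x-w, v⟫ = 0 := by
      intro v
      have := congrFun (congrArg DFunLike.coe hD0) v
      simp only [ContinuousLinearMap.add_apply, ContinuousLinearMap.smul_apply,
        ContinuousLinearMap.comp_apply, ContinuousLinearMap.coe_id', id,
        fderivInnerCLM_apply, innerSL_apply_apply, ContinuousLinearMap.prod_apply,
        ContinuousLinearMap.zero_apply, smul_eq_mul, nsmul_eq_mul, Nat.cast_ofNat,
        ContinuousLinearMap.coe_smul', Pi.smul_apply] at this
      rw [Real.sqrt_sq (norm_nonneg _)] at this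
      have hsv : ⟪H v, x - w⟫ = ⟪H (x-w), v⟫ := by
        rw [hHsymm v (x-w), real_inner_comm]
      nlinarith [this, hsv]
    have hz : ⟪f' w + H (x - w) + (η / 2 * ‖x - w‖) • (x - w),
        f' w + H (x - w) + (η / 2 * ‖x - w‖) • (x - w)⟫ = 0 := by
      rw [inner_add_left, inner_add_left, real_inner_smul_left]
      linarith [happ (f' w + H (x - w) + (η / 2 * ‖x - w‖) • (x - w))]
    exact inner_self_eq_zero.mp hz
  -- Taylor bound
  have hTay := taylor_grad_bound f' f'' γ hhess hlip w x
  -- the gap operator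
  have hAsym : ∀ u v, ⟪(H - f'' w) u, v⟫ = ⟪(H - f'' w) v, u⟫ := by
    intro u v
    simp only [ContinuousLinearMap.sub_apply, inner_sub_left]
    rw [hHsymm u v, real_inner_comm u (H v), hsymW u v]
  have hApsd : ∀ v, 0 ≤ ⟪(H - f'' w) v, v⟫ := by
    intro v
    have h := hHlo v
    simp only [ContinuousLinearMap.sub_apply]
    nlinarith [sq_nonneg ‖v‖, mul_nonneg hμ (sq_nonneg ‖v‖)]
  have hq0 : 0 ≤ ⟪(H - f'' w) (x-w), x-w⟫ := hApsd _
  have hqlo : μ/2*‖x-w‖^2 ≤ ⟪(H - f'' w) (x-w), x-w⟫ := by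
    have := hHlo (x-w)
    simpa [ContinuousLinearMap.sub_apply] using this
  have hqhi : ⟪(H - f'' w) (x-w), x-w⟫ ≤ μ*‖x-w‖^2 := by
    have := hHhi (x-w)
    simpa [ContinuousLinearMap.sub_apply] using this
  have hp2 : ‖(H - f'' w) (x-w)‖^2 ≤ μ * ⟪(H - f'' w) (x-w), x-w⟫ := by
    have hcs := psd_inner_mul_le (H - f'' w) hAsym hApsd (x-w) ((H - f'' w) (x-w))
    have hhiAs : ⟪(H - f'' w) ((H - f'' w) (x-w)), (H - f'' w) (x-w)⟫
        ≤ μ * ‖(H - f'' w) (x-w)‖^2 := by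
      have := hHhi ((H - f'' w) (x-w))
      simpa [ContinuousLinearMap.sub_apply] using this
    have hinself : ⟪(H - f'' w) (x-w), (H - f'' w) (x-w)⟫ = ‖(H - f'' w) (x-w)‖^2 :=
      real_inner_self_eq_norm_sq _
    by_cases hz : ‖(H - f'' w) (x-w)‖ = 0
    · rw [hz]
      simpa using mul_nonneg hμ hq0
    · have hzpos : 0 < ‖(H - f'' w) (x-w)‖^2 := by positivity
      nlinarith [hcs, hhiAs, hinself, hq0, hzpos]
  -- decomposition of the gradient at x
  have hfx : f' x = (f' x - f' w - f'' w (x-w))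
      - ((H - f'' w) (x-w) + (η/2*‖x-w‖) • (x-w)) := by
    have heq : (f' x - f' w - f'' w (x-w)) - ((H - f'' w) (x-w) + (η/2*‖x-w‖) • (x-w))
        = f' x - (f' w + H (x-w) + (η/2*‖x-w‖) • (x-w)) := by
      simp only [ContinuousLinearMap.sub_apply]
      abel
    rw [heq, hstat, sub_zero]
  have hAs : ‖(H - f'' w) (x-w)‖ ≤ μ*‖x-w‖ := by
    apply sq_le_imp' _ _ (norm_nonneg _) (mul_nonneg hμ hr0)
    calc ‖(H - f'' w) (x-w)‖^2 ≤ μ * ⟪(H - f'' w) (x-w), x-w⟫ := hp2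
      _ ≤ μ * (μ*‖x-w‖^2) := mul_le_mul_of_nonneg_left hqhi hμ
      _ = (μ*‖x-w‖)^2 := by ring
  have hgb : ‖f' x‖ ≤ γ/2*‖x-w‖^2 + ‖(H - f'' w) (x-w) + (η/2*‖x-w‖) • (x-w)‖ := by
    calc ‖f' x‖ = ‖(f' x - f' w - f'' w (x-w))
        - ((H - f'' w) (x-w) + (η/2*‖x-w‖) • (x-w))‖ := by rw [← hfx]
      _ ≤ ‖f' x - f' w - f'' w (x-w)‖ + ‖(H - f'' w) (x-w) + (η/2*‖x-w‖) • (x-w)‖ :=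
        norm_sub_le _ _
      _ ≤ γ/2*‖x-w‖^2 + ‖(H - f'' w) (x-w) + (η/2*‖x-w‖) • (x-w)‖ := by
        exact add_le_add_left hTay _
  constructor
  · -- part 1
    have hsmul : ‖(η/2*‖x-w‖) • (x-w)‖ = (η/2*‖x-w‖) * ‖x-w‖ := by
      rw [norm_smul, Real.norm_eq_abs, abs_of_nonneg (by positivity)]
    have hSv : ‖(H - f'' w) (x-w) + (η/2*‖x-w‖) • (x-w)‖
        ≤ μ*‖x-w‖ + η/2*‖x-w‖^2 := by
      calc ‖(H - f'' w) (x-w) + (η/2*‖x-w‖) • (x-w)‖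
          ≤ ‖(H - f'' w) (x-w)‖ + ‖(η/2*‖x-w‖) • (x-w)‖ := norm_add_le _ _
        _ ≤ μ*‖x-w‖ + (η/2*‖x-w‖) * ‖x-w‖ := by rw [hsmul]; exact add_le_add_left hAs _
        _ = μ*‖x-w‖ + η/2*‖x-w‖^2 := by ring
    have := le_trans hgb (by linarith : γ/2*‖x-w‖^2 + ‖(H - f'' w) (x-w) + (η/2*‖x-w‖) • (x-w)‖
        ≤ γ/2*‖x-w‖^2 + (μ*‖x-w‖ + η/2*‖x-w‖^2))
    nlinarith [sq_nonneg ‖x-w‖]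
  · -- part 2
    rw [ge_iff_le]
    have hSveq : ‖(H - f'' w) (x-w) + (η/2*‖x-w‖) • (x-w)‖^2
        = ‖(H - f'' w) (x-w)‖^2 + η*‖x-w‖*⟪(H - f'' w) (x-w), x-w⟫
          + (η/2*‖x-w‖)^2*‖x-w‖^2 := by
      rw [norm_add_sq_real, real_inner_smul_right, norm_smul, Real.norm_eq_abs,
        abs_of_nonneg (by positivity : (0:ℝ) ≤ η/2*‖x-w‖)]
      ring
    have hS2b : ‖(H - f'' w) (x-w) + (η/2*‖x-w‖) • (x-w)‖^2
        ≤ (μ + η*‖x-w‖)*⟪(H - f'' w) (x-w), x-w⟫ + η^2*‖x-w‖^4/4 := by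
      nlinarith [hp2, hSveq]
    have hinner : ⟪(H - f'' w) (x-w), x-w⟫ + (η-γ)/2*‖x-w‖^3 ≤ ⟪f' x, w - x⟫ := by
      have hwx : w - x = -(x - w) := by abel
      rw [hwx, inner_neg_right]
      have hieq : ⟪f' x, x-w⟫ = ⟪f' x - f' w - f'' w (x-w), x-w⟫
          - (⟪(H - f'' w) (x-w), x-w⟫ + (η/2*‖x-w‖)*‖x-w‖^2) := by
        nth_rewrite 1 [hfx]
        rw [inner_sub_left, inner_add_left, real_inner_smul_left, real_inner_self_eq_norm_sq]
      have hRs : ⟪f' x - f' w - f'' w (x-w), x-w⟫ ≤ γ/2*‖x-w‖^3 := by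
        calc ⟪f' x - f' w - f'' w (x-w), x-w⟫ ≤ ‖f' x - f' w - f'' w (x-w)‖ * ‖x-w‖ :=
            real_inner_le_norm _ _
          _ ≤ (γ/2*‖x-w‖^2) * ‖x-w‖ := mul_le_mul_of_nonneg_right hTay hr0
          _ = γ/2*‖x-w‖^3 := by ring
      nlinarith [hieq, hRs]
    by_cases hμ0 : μ = 0
    · subst hμ0
      refine le_trans (min_le_left _ _) ?_
      rw [mul_zero, div_zero]
      have h1 : 0 ≤ ⟪(H - f'' w) (x-w), x-w⟫ + (η-γ)/2*‖x-w‖^3 := by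
        have : (0:ℝ) ≤ (η-γ)/2*‖x-w‖^3 := mul_nonneg (by linarith) (by positivity)
        linarith
      linarith [hinner]
    · have hμpos : 0 < μ := hμ.lt_of_ne (Ne.symm hμ0)
      by_cases hr : ‖x - w‖ = 0
      · have hxw : x - w = 0 := norm_eq_zero.mp hr
        have hfw : f' w = 0 := by
          have h := hstat
          rw [hxw] at h
          simpa using h
        have hfx0 : f' x = 0 := by
          have h := hTay
          rw [hxw, hfw] at h
          simp only [map_zero, sub_zero, norm_zero] at h
          have h2 : ‖f' x‖ ≤ 0 := by simpa using h
          exact norm_eq_zero.mp (le_antisymm h2 (norm_nonneg _))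
        rw [hfx0]
        simp
      · have hrpos : 0 < ‖x - w‖ := hr0.lt_of_ne' hr
        have key := scalar_unnorm γ η μ (⟪(H - f'' w) (x-w), x-w⟫)
          (‖(H - f'' w) (x-w) + (η/2*‖x-w‖) • (x-w)‖) (‖f' x‖) (‖x-w‖)
          hγ hη hμpos hrpos hqlo hqhi (norm_nonneg _) hS2b (norm_nonneg _) hgb
        exact le_trans key hinner
end

section
/- Let x_{t+1} minimize x ↦ f(x_t) + ⟨∇f(x_t), x−x_t⟩ + (1/2)⟨H_t(x−x_t), x−x_t⟩ + (η_t/6)‖x−x_t‖³ and set h_t = x_{t+1} − x_t, λ_t = (η_t/2)‖h_t‖. Then (H_t + λ_t I)h_t = −∇f(x_t) and H_t + λ_t I is positive semidefinite. -/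
/-! At a minimizer `h` of the cubic model `m(h) = ⟪g, h⟫ + ½⟪H h, h⟫ + (η/6)‖h‖³` the gradient
`g + H h + (η/2)‖h‖ h` vanishes. With `λ = (η/2)‖h‖` this gives the identity
`m y - m h = ½⟪(H + λ)(y - h), y - h⟫ + (η/12)(‖y‖ - ‖h‖)²(2‖y‖ + ‖h‖)`, so the quadratic form of
`H + λ` is nonnegative on every `y - h` with `‖y‖ = ‖h‖`. Every `u` with `⟪h, u⟫ ≠ 0` is a
multiple of such a `y - h`, and for `h ≠ 0` the remaining `u` are limits of these. For `h = 0` we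
get `g = 0`, and `m (s • v) ≥ 0` for small `s > 0` forces `⟪H v, v⟫ ≥ 0`. -/

open scoped RealInnerProductSpace

theorem nonneg_at_zero_of_forall_pos {φ : ℝ → ℝ} (hφ : ContinuousWithinAt φ (Set.Ioi 0) 0)
    (hpos : ∀ s > 0, 0 ≤ φ s) : 0 ≤ φ 0 :=
  ge_of_tendsto hφ (eventually_nhdsWithin_of_forall hpos)

section CubicModel

variable {E : Type*} [NormedAddCommGroup E] [InnerProductSpace ℝ E]
  (g : E) (H : E →L[ℝ] E) (η : ℝ)

noncomputable def cubicModel (h : E) : ℝ :=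
  ⟪g, h⟫ + 1 / 2 * ⟪H h, h⟫ + η / 6 * ‖h‖ ^ 3

variable {g H η}

theorem hasFDerivAt_cubicModel (hH : (H : E →ₗ[ℝ] E).IsSymmetric) (h : E) :
    HasFDerivAt (cubicModel g H η) (innerSL ℝ (g + H h + (η / 2 * ‖h‖) • h)) h := by
  have hquad := H.hasFDerivAt.inner ℝ (hasFDerivAt_id h)
  have hcube : HasFDerivAt (fun x : E => ‖x‖ ^ 3) ((3 * ‖h‖) • innerSL ℝ h) h := by
    convert hasFDerivAt_norm_rpow h (p := 3) (by norm_num) using 3 <;> norm_num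
  refine ((((innerSL ℝ g).hasFDerivAt).add (hquad.const_mul (1 / 2))).add
    (hcube.const_mul (η / 6))).congr_fderiv (ContinuousLinearMap.ext fun w => ?_)
  have hHw : ⟪H w, h⟫ = ⟪H h, w⟫ := (hH w h).trans (real_inner_comm _ _)
  simp only [add_apply, smul_apply, coe_innerSL_apply, ContinuousLinearMap.comp_apply,
    ContinuousLinearMap.prod_apply, ContinuousLinearMap.id_apply, id_eq, fderivInnerCLM_apply, hHw,
    smul_eq_mul, map_add, map_smul]
  ring

theorem IsLocalMin.cubicModel_first_order (hH : (H : E →ₗ[ℝ] E).IsSymmetric) {h : E}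
    (hmin : IsLocalMin (cubicModel g H η) h) : H h + (η / 2 * ‖h‖) • h = -g := by
  have hzero : g + H h + (η / 2 * ‖h‖) • h = 0 := by
    have := congr($(hmin.hasFDerivAt_eq_zero (hasFDerivAt_cubicModel hH h))
      (g + H h + (η / 2 * ‖h‖) • h))
    rwa [zero_apply, innerSL_apply_apply, inner_self_eq_zero] at this
  linear_combination (norm := module) hzero

theorem cubicModel_sub_cubicModel (hH : (H : E →ₗ[ℝ] E).IsSymmetric) {h : E}
    (hstat : H h + (η / 2 * ‖h‖) • h = -g) (y : E) :
    cubicModel g H η y - cubicModel g H η h =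
      1 / 2 * ⟪H (y - h) + (η / 2 * ‖h‖) • (y - h), y - h⟫
        + η / 12 * (‖y‖ - ‖h‖) ^ 2 * (2 * ‖y‖ + ‖h‖) := by
  obtain rfl : g = -(H h + (η / 2 * ‖h‖) • h) := by rw [hstat, neg_neg]
  have hHyh : ⟪H y, h⟫ = ⟪H h, y⟫ := (hH y h).trans (real_inner_comm _ _)
  simp only [cubicModel, map_sub, inner_sub_left, inner_sub_right, inner_add_left,
    inner_neg_left, real_inner_smul_left, real_inner_self_eq_norm_sq, hHyh, real_inner_comm h y]
  ring

theorem inner_shift_nonneg_of_norm_eq (hH : (H : E →ₗ[ℝ] E).IsSymmetric) {h : E}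
    (hmin : ∀ y, cubicModel g H η h ≤ cubicModel g H η y) {y : E} (hy : ‖y‖ = ‖h‖) :
    0 ≤ ⟪H (y - h) + (η / 2 * ‖h‖) • (y - h), y - h⟫ := by
  have hstat := IsLocalMin.cubicModel_first_order hH (Filter.Eventually.of_forall hmin)
  have := cubicModel_sub_cubicModel hH hstat y
  rw [hy, sub_self] at this
  linarith [hmin y]

theorem inner_shift_nonneg_of_inner_ne_zero (hH : (H : E →ₗ[ℝ] E).IsSymmetric) {h : E}
    (hmin : ∀ y, cubicModel g H η h ≤ cubicModel g H η y) {u : E} (hu : ⟪h, u⟫ ≠ 0) :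
    0 ≤ ⟪H u + (η / 2 * ‖h‖) • u, u⟫ := by
  have hu0 : ‖u‖ ^ 2 ≠ 0 := by
    rintro hu0
    rw [sq_eq_zero_iff, norm_eq_zero] at hu0
    simp [hu0] at hu
  set t := -2 * ⟪h, u⟫ / ‖u‖ ^ 2
  have ht : t ≠ 0 := div_ne_zero (by simpa using hu) hu0
  have htu : t * ‖u‖ ^ 2 = -2 * ⟪h, u⟫ := div_mul_cancel₀ _ hu0
  have hnorm : ‖h + t • u‖ = ‖h‖ := by
    rw [← sq_eq_sq₀ (norm_nonneg _) (norm_nonneg _), norm_add_sq_real, real_inner_smul_right,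
      norm_smul, mul_pow, Real.norm_eq_abs, sq_abs]
    linear_combination t * htu
  have := inner_shift_nonneg_of_norm_eq hH hmin hnorm
  rw [add_sub_cancel_left, map_smul, smul_comm, ← smul_add, real_inner_smul_left,
    real_inner_smul_right, ← mul_assoc] at this
  exact nonneg_of_mul_nonneg_right this (mul_self_pos.mpr ht)

theorem cubicModel_zero_smul (v : E) {s : ℝ} (hs : 0 ≤ s) :
    cubicModel 0 H η (s • v) = s ^ 2 / 2 * (⟪H v, v⟫ + η / 3 * s * ‖v‖ ^ 3) := by
  simp only [cubicModel, inner_zero_left, map_smul, real_inner_smul_left, real_inner_smul_right,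
    norm_smul, Real.norm_of_nonneg hs]
  ring

theorem inner_apply_nonneg_of_isMin_zero (hH : (H : E →ₗ[ℝ] E).IsSymmetric)
    (hmin : ∀ y, cubicModel g H η 0 ≤ cubicModel g H η y) (v : E) : 0 ≤ ⟪H v, v⟫ := by
  obtain rfl : g = 0 := by
    simpa using (IsLocalMin.cubicModel_first_order hH (Filter.Eventually.of_forall hmin)).symm
  have key := nonneg_at_zero_of_forall_pos (φ := fun s => ⟪H v, v⟫ + η / 3 * s * ‖v‖ ^ 3)
    (by fun_prop) fun s hs => by
      have := hmin (s • v)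
      rw [cubicModel_zero_smul v hs.le] at this
      refine nonneg_of_mul_nonneg_right ?_ (by positivity : 0 < s ^ 2 / 2)
      simpa [cubicModel] using this
  simpa using key

theorem cubicModel_second_order (hH : (H : E →ₗ[ℝ] E).IsSymmetric) {h : E}
    (hmin : ∀ y, cubicModel g H η h ≤ cubicModel g H η y) (v : E) :
    0 ≤ ⟪H v + (η / 2 * ‖h‖) • v, v⟫ := by
  rcases eq_or_ne h 0 with rfl | hh
  · simpa using inner_apply_nonneg_of_isMin_zero hH hmin v
  rcases ne_or_eq ⟪h, v⟫ 0 with hv | hv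
  · exact inner_shift_nonneg_of_inner_ne_zero hH hmin hv
  have key := nonneg_at_zero_of_forall_pos
    (φ := fun s => ⟪H (v + s • h) + (η / 2 * ‖h‖) • (v + s • h), v + s • h⟫)
    (by fun_prop) fun s hs => inner_shift_nonneg_of_inner_ne_zero hH hmin (by
      rw [inner_add_right, hv, real_inner_smul_right, real_inner_self_eq_norm_sq]
      positivity)
  simpa using key

end CubicModel

theorem stmt_16_general (n : ℕ) (f : EuclideanSpace ℝ (Fin n) → ℝ)
    (f' : EuclideanSpace ℝ (Fin n) → EuclideanSpace ℝ (Fin n))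
    (H : EuclideanSpace ℝ (Fin n) →L[ℝ] EuclideanSpace ℝ (Fin n))
    (hHsymm : ∀ u v, ⟪H u, v⟫ = ⟪u, H v⟫)
    (ηt : ℝ)
    (xt xnext : EuclideanSpace ℝ (Fin n))
    (hmin : ∀ x, f xt + ⟪f' xt, xnext - xt⟫ + 1 / 2 * ⟪H (xnext - xt), xnext - xt⟫
        + ηt / 6 * ‖xnext - xt‖ ^ 3
      ≤ f xt + ⟪f' xt, x - xt⟫ + 1 / 2 * ⟪H (x - xt), x - xt⟫ + ηt / 6 * ‖x - xt‖ ^ 3) :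
    H (xnext - xt) + (ηt / 2 * ‖xnext - xt‖) • (xnext - xt) = -f' xt ∧
    ∀ v, 0 ≤ ⟪H v + (ηt / 2 * ‖xnext - xt‖) • v, v⟫ := by
  have hH : (H : EuclideanSpace ℝ (Fin n) →ₗ[ℝ] EuclideanSpace ℝ (Fin n)).IsSymmetric := hHsymm
  have hmodel : ∀ y, cubicModel (f' xt) H ηt (xnext - xt) ≤ cubicModel (f' xt) H ηt y := by
    intro y
    have := hmin (xt + y)
    rw [add_sub_cancel_left] at this
    simp only [cubicModel]
    linarith
  exact ⟨IsLocalMin.cubicModel_first_order hH (Filter.Eventually.of_forall hmodel),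
    cubicModel_second_order hH hmodel⟩

/-- Characterization of the cubic-regularized Newton step (Lemma 6 of the paper):
(H_t + λ_t I)h_t = −∇f(x_t) with λ_t = (η_t/2)‖h_t‖, and H_t + λ_t I ⪰ 0. -/
theorem stmt_16 (n : ℕ) (f : EuclideanSpace ℝ (Fin n) → ℝ)
    (f' : EuclideanSpace ℝ (Fin n) → EuclideanSpace ℝ (Fin n))
    (hgrad : ∀ x, HasGradientAt f (f' x) x)
    (H : EuclideanSpace ℝ (Fin n) →L[ℝ] EuclideanSpace ℝ (Fin n))
    (hHsymm : ∀ u v, ⟪H u, v⟫ = ⟪u, H v⟫)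
    (hHpsd : ∀ v, 0 ≤ ⟪H v, v⟫)
    (ηt : ℝ) (hη : 0 < ηt)
    (xt xnext : EuclideanSpace ℝ (Fin n))
    (hmin : ∀ x, f xt + ⟪f' xt, xnext - xt⟫ + 1 / 2 * ⟪H (xnext - xt), xnext - xt⟫
        + ηt / 6 * ‖xnext - xt‖ ^ 3
      ≤ f xt + ⟪f' xt, x - xt⟫ + 1 / 2 * ⟪H (x - xt), x - xt⟫ + ηt / 6 * ‖x - xt‖ ^ 3) :
    H (xnext - xt) + (ηt / 2 * ‖xnext - xt‖) • (xnext - xt) = -f' xt ∧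
    ∀ v, 0 ≤ ⟪H v + (ηt / 2 * ‖xnext - xt‖) • v, v⟫ :=
  stmt_16_general n f f' H hHsymm ηt xt xnext hmin
end
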